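/- (Theorem 4.1, parts 1 and 2, essentially cyclic rule) Let the sequences {x_k^t}, {x_0^t}, {y^t} be generated by the flexible ADMM (Algorithm 4) for the sharing problem under the period-T essentially cyclic rule, and suppose Assumption C holds. Then: (1) lim_{t→∞} ‖Σ_{k=1}^K A_k x_k^{t+1} − x_0^{t+1}‖ = 0; (2) every limit point ({x_k*}, x_0*, y*) of the sequence ({x_k^{t+1}}, x_0^{t+1}, y^{t+1}) is a stationary solution of the reformulated sharing problem, i.e.: x_k* minimizes x_k ↦ g_k(x_k) − ⟨y*, A_k x_k⟩ over X_k for each k ∈ 𝒦 (the indices with g_k convex); ⟨x_k − x_k*, ∇g_k(x_k*) − A_k^T y*⟩ ≥ 0 for all x_k ∈ X_k, for each k ∉ 𝒦; ∇ℓ(x_0*) + y* = 0; and Σ_{k=1}^K A_k x_k* = x_0*. -/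

import Mathlib

/-!
The augmented Lagrangian `augLs` is a Lyapunov function for the iteration. The first-order
condition of the `x_0`-step gives `y = -∇ℓ(x_0)` along the iterates, so the dual steps are
controlled by the primal ones, `‖Δy‖ ≤ L ‖Δx_0‖`. Each block step then lowers `augLs` by
`γ_k / 2 ‖Δx_k‖²` and the `(x_0, y)`-step by `(γ / 2 - L² / ρ) ‖Δx_0‖²`, while `ρ ≥ L` and the
descent lemma bound `augLs` below by the objective; hence all increments tend to zero. Every
window of `T` steps updates every block: at an `x_0`-update the residual equals `-Δy / ρ`, and
around an `x_k`-update the iterates share the limit of the subsequence, so the optimality of the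
block step passes to the limit point.
-/

open Filter
open scoped RealInnerProductSpace BigOperators

/-- Augmented Lagrangian for the reformulated sharing problem:
`L({x_k}, x_0; y) = Σ_k g_k(x_k) + ℓ(x_0) + ⟨x_0 − Σ_k A_k x_k, y⟩
  + (ρ/2)‖x_0 − Σ_k A_k x_k‖²`. -/
noncomputable def augLs {M K : ℕ} {Nv : Fin K → ℕ}
    (g : ∀ k : Fin K, EuclideanSpace ℝ (Fin (Nv k)) → ℝ)
    (l : EuclideanSpace ℝ (Fin M) → ℝ) (ρ : ℝ)
    (A : ∀ k : Fin K, EuclideanSpace ℝ (Fin (Nv k)) →L[ℝ] EuclideanSpace ℝ (Fin M))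
    (xk : ∀ k : Fin K, EuclideanSpace ℝ (Fin (Nv k)))
    (x0 y : EuclideanSpace ℝ (Fin M)) : ℝ :=
  (∑ k, g k (xk k)) + l x0 + ⟪x0 - ∑ k, A k (xk k), y⟫
    + ρ / 2 * ‖x0 - ∑ k, A k (xk k)‖ ^ 2

open scoped Topology

lemma le_of_forall_mem_Ioo_le_add_mul {a b c : ℝ} (h : ∀ θ ∈ Set.Ioo (0 : ℝ) 1, a ≤ b + θ * c) :
    a ≤ b := by
  have hlim : Tendsto (fun θ : ℝ => b + θ * c) (𝓝[>] 0) (𝓝 b) :=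
    tendsto_nhdsWithin_of_tendsto_nhds (by simpa using (Continuous.tendsto (by fun_prop) 0 :
      Tendsto (fun θ : ℝ => b + θ * c) (𝓝 0) (𝓝 (b + 0 * c))))
  exact ge_of_tendsto hlim (by filter_upwards [Ioo_mem_nhdsGT one_pos] with θ hθ using h θ hθ)

section Convexity

variable {E : Type*} [NormedAddCommGroup E] [InnerProductSpace ℝ E]

lemma StrongConvexOn.add_convexOn {S : Set E} {m : ℝ} {f g : E → ℝ} (hf : StrongConvexOn S m f)
    (hg : ConvexOn ℝ S g) : StrongConvexOn S m (f + g) := by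
  have := UniformConvexOn.add hf (uniformConvexOn_zero.2 hg)
  rwa [add_zero] at this

lemma StrongConvexOn.add_linear_add_const {S : Set E} {m : ℝ} {f : E → ℝ}
    (hf : StrongConvexOn S m f) (φ : E →ₗ[ℝ] ℝ) (c : ℝ) :
    StrongConvexOn S m (fun z => f z + (φ z + c)) :=
  hf.add_convexOn ((φ.convexOn hf.1).add_const c)

/-- Comparing `h` at `a` with `h` at `a + θ (z - a)` and letting `θ → 0`, the quadratic slack
`c ‖z - a‖²` disappears while the strong convexity gain survives. -/
lemma StrongConvexOn.add_sq_le_of_forall_le_add_sq {S : Set E} {m c : ℝ} {h : E → ℝ}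
    (hh : StrongConvexOn S m h) {a : E} (ha : a ∈ S)
    (hmin : ∀ z ∈ S, h a ≤ h z + c * ‖z - a‖ ^ 2) {z : E} (hz : z ∈ S) :
    h a + m / 2 * ‖z - a‖ ^ 2 ≤ h z := by
  refine le_of_forall_mem_Ioo_le_add_mul (c := (m / 2 + c) * ‖z - a‖ ^ 2) ?_
  rintro θ ⟨hθ0, hθ1⟩
  have hcomb : θ • z + (1 - θ) • a = a + θ • (z - a) := by
    rw [smul_sub, sub_smul, one_smul]; abel
  have hconv := hh.2 hz ha hθ0.le (sub_nonneg.2 hθ1.le) (add_sub_cancel θ 1)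
  have hle := hmin _ (hh.1 hz ha hθ0.le (sub_nonneg.2 hθ1.le) (add_sub_cancel θ 1))
  rw [hcomb] at hconv hle
  rw [add_sub_cancel_left, norm_smul, Real.norm_of_nonneg hθ0.le, mul_pow] at hle
  simp only [smul_eq_mul] at hconv
  have key : θ * (h a + m / 2 * ‖z - a‖ ^ 2) ≤
      θ * (h z + θ * ((m / 2 + c) * ‖z - a‖ ^ 2)) := by nlinarith
  exact le_of_mul_le_mul_left key hθ0

lemma StrongConvexOn.add_sq_le_of_forall_le {S : Set E} {m : ℝ} {h : E → ℝ}
    (hh : StrongConvexOn S m h) {a : E} (ha : a ∈ S) (hmin : ∀ z ∈ S, h a ≤ h z) {z : E}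
    (hz : z ∈ S) : h a + m / 2 * ‖z - a‖ ^ 2 ≤ h z :=
  hh.add_sq_le_of_forall_le_add_sq (c := 0) ha (fun w hw => by simpa using hmin w hw) hz

lemma ConvexOn.le_of_forall_le_add_sq {S : Set E} {c : ℝ} {h : E → ℝ} (hh : ConvexOn ℝ S h)
    {a : E} (ha : a ∈ S) (hmin : ∀ z ∈ S, h a ≤ h z + c * ‖z - a‖ ^ 2) {z : E} (hz : z ∈ S) :
    h a ≤ h z := by
  simpa using (strongConvexOn_zero.2 hh).add_sq_le_of_forall_le_add_sq ha hmin hz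

lemma HasFDerivAt.nonneg_of_forall_le_add_sq {S : Set E} (hS : Convex ℝ S) {h : E → ℝ}
    {h' : E →L[ℝ] ℝ} {a : E} (hh : HasFDerivAt h h' a) (ha : a ∈ S) {c : ℝ}
    (hmin : ∀ z ∈ S, h a ≤ h z + c * ‖z - a‖ ^ 2) {z : E} (hz : z ∈ S) :
    0 ≤ h' (z - a) := by
  have hsq : HasFDerivAt (fun w => h w + c * ‖w - a‖ ^ 2) h' a := by
    simpa using hh.fun_add ((((hasFDerivAt_id a).sub_const a).norm_sq).const_mul c)
  have hloc : IsLocalMinOn (fun w => h w + c * ‖w - a‖ ^ 2) S a :=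
    (isMinOn_iff.2 fun w hw => by simpa using hmin w hw).localize
  exact hloc.hasFDerivWithinAt_nonneg hsq.hasFDerivWithinAt
    (sub_mem_posTangentConeAt_of_segment_subset (hS.segment_subset ha hz))

variable [CompleteSpace E]

lemma HasGradientAt.add_add_smul_sub_eq_zero_of_forall_le {l : E → ℝ} {l' a y s : E} {ρ : ℝ}
    (hl : HasGradientAt l l' a)
    (hmin : ∀ z, l a + ⟪y, a⟫ + ρ / 2 * ‖a - s‖ ^ 2 ≤ l z + ⟪y, z⟫ + ρ / 2 * ‖z - s‖ ^ 2) :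
    l' + y + ρ • (a - s) = 0 := by
  set w := l' + y + ρ • (a - s)
  have hφ : HasFDerivAt (fun z => l z + ⟪y, z⟫ + ρ / 2 * ‖z - s‖ ^ 2) (innerSL ℝ w) a := by
    refine ((hl.hasFDerivAt.fun_add (innerSL ℝ y).hasFDerivAt).fun_add
      ((((hasFDerivAt_id a).sub_const s).norm_sq).const_mul (ρ / 2))).congr_fderiv ?_
    ext v
    simp only [id_eq, map_sub, ContinuousLinearMap.comp_id, add_apply,
      InnerProductSpace.toDual_apply_apply, coe_innerSL_apply, smul_apply,
      nsmul_eq_mul, Nat.cast_ofNat, smul_eq_mul, map_add, map_smul, w]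
    ring
  have := hφ.nonneg_of_forall_le_add_sq convex_univ (Set.mem_univ a) (c := 0)
    (fun z _ => by simpa using hmin z) (Set.mem_univ (a - w))
  simpa using this

lemma le_add_inner_add_sq_of_lipschitz_gradient {l : E → ℝ} {l' : E → E} {L : ℝ}
    (hl : ∀ z, HasGradientAt l (l' z) z) (hL : ∀ u v, ‖l' u - l' v‖ ≤ L * ‖u - v‖) (u v : E) :
    l v ≤ l u + ⟪l' u, v - u⟫ + L / 2 * ‖v - u‖ ^ 2 := by
  set d := v - u
  let ψ : ℝ → ℝ := fun θ => l (u + θ • d) - θ * ⟪l' u, d⟫ - L / 2 * θ ^ 2 * ‖d‖ ^ 2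
  have hψ : ∀ θ, HasDerivAt ψ (⟪l' (u + θ • d), d⟫ - ⟪l' u, d⟫ - L * θ * ‖d‖ ^ 2) θ := by
    intro θ
    have hline : HasDerivAt (fun θ : ℝ => u + θ • d) d θ := by
      simpa using ((hasDerivAt_id θ).smul_const d).const_add u
    refine (((hl _).hasFDerivAt.comp_hasDerivAt θ hline).fun_sub
      ((hasDerivAt_id θ).mul_const ⟪l' u, d⟫)).fun_sub
      (((hasDerivAt_pow 2 θ).const_mul (L / 2)).mul_const (‖d‖ ^ 2)) |>.congr_deriv ?_
    simp only [InnerProductSpace.toDual_apply_apply, Nat.cast_ofNat, Nat.add_one_sub_one, pow_one]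
    ring
  have hψ_nonpos : ∀ θ ∈ interior (Set.Icc (0 : ℝ) 1),
      ⟪l' (u + θ • d), d⟫ - ⟪l' u, d⟫ - L * θ * ‖d‖ ^ 2 ≤ 0 := by
    intro θ hθ
    rw [interior_Icc] at hθ
    have hLθ := hL (u + θ • d) u
    rw [add_sub_cancel_left, norm_smul, Real.norm_of_nonneg hθ.1.le] at hLθ
    rw [sub_nonpos, ← inner_sub_left]
    calc ⟪l' (u + θ • d) - l' u, d⟫ ≤ ‖l' (u + θ • d) - l' u‖ * ‖d‖ := real_inner_le_norm _ _
      _ ≤ L * θ * ‖d‖ ^ 2 := by nlinarith [norm_nonneg d]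
  have hanti := antitoneOn_of_hasDerivWithinAt_nonpos (convex_Icc 0 1)
    (HasDerivAt.continuousOn fun θ _ => hψ θ) (fun θ _ => (hψ θ).hasDerivWithinAt) hψ_nonpos
  have := hanti (Set.left_mem_Icc.2 zero_le_one) (Set.right_mem_Icc.2 zero_le_one) zero_le_one
  simp only [ψ, zero_smul, add_zero, one_smul, d, add_sub_cancel] at this
  linarith

end Convexity

section Sequences

variable {W : Type*} [SeminormedAddCommGroup W]

lemma tendsto_sub_of_bounded_lag {u : ℕ → W} (hu : Tendsto (fun n => u (n + 1) - u n) atTop (𝓝 0))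
    {φ σ : ℕ → ℕ} {T : ℕ} (hφ : Tendsto φ atTop atTop) (h₁ : ∀ t, φ t ≤ σ t)
    (h₂ : ∀ t, σ t ≤ φ t + T) : Tendsto (fun t => u (σ t) - u (φ t)) atTop (𝓝 0) := by
  rw [tendsto_zero_iff_norm_tendsto_zero] at hu ⊢
  have hwin : Tendsto (fun t => ∑ i ∈ Finset.range T, ‖u (φ t + i + 1) - u (φ t + i)‖)
      atTop (𝓝 0) := by
    simpa using tendsto_finsetSum (Finset.range T) fun i _ =>
      hu.comp (tendsto_atTop_mono (fun t => Nat.le_add_right (φ t) i) hφ)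
  refine squeeze_zero (fun t => norm_nonneg _) (fun t => ?_) hwin
  calc ‖u (σ t) - u (φ t)‖ = dist (u (φ t)) (u (σ t)) := (dist_eq_norm' _ _).symm
    _ ≤ ∑ i ∈ Finset.Ico (φ t) (σ t), dist (u i) (u (i + 1)) := dist_le_Ico_sum_dist u (h₁ t)
    _ ≤ ∑ i ∈ Finset.Ico (φ t) (φ t + T), dist (u i) (u (i + 1)) :=
      Finset.sum_le_sum_of_subset_of_nonneg (Finset.Ico_subset_Ico le_rfl (h₂ t))
        fun _ _ _ => dist_nonneg
    _ = _ := by simp [Finset.sum_Ico_eq_sum_range, dist_eq_norm', add_assoc]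

lemma Filter.Tendsto.comp_of_bounded_lag {u : ℕ → W} {φ σ : ℕ → ℕ} {a : W}
    (ha : Tendsto (fun t => u (φ t)) atTop (𝓝 a))
    (hu : Tendsto (fun n => u (n + 1) - u n) atTop (𝓝 0)) {T : ℕ} (hφ : Tendsto φ atTop atTop)
    (h₁ : ∀ t, φ t ≤ σ t) (h₂ : ∀ t, σ t ≤ φ t + T) : Tendsto (fun t => u (σ t)) atTop (𝓝 a) := by
  simpa using ha.add (tendsto_sub_of_bounded_lag hu hφ h₁ h₂)

end Sequences

lemma tendsto_zero_of_mul_sq_le_sub_succ {V a : ℕ → ℝ} {c : ℝ} (hc : 0 < c)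
    (hV : BddBelow (Set.range V)) (ha : ∀ n, 0 ≤ a n) (h : ∀ n, c * a n ^ 2 ≤ V n - V (n + 1)) :
    Tendsto a atTop (𝓝 0) := by
  have hlim := tendsto_atTop_ciInf (antitone_nat_of_succ_le fun n => by
    nlinarith [h n, sq_nonneg (a n)]) hV
  have hdiff : Tendsto (fun n => (V n - V (n + 1)) / c) atTop (𝓝 0) := by
    simpa using (hlim.sub (hlim.comp (tendsto_add_atTop_nat 1))).div_const c
  refine squeeze_zero ha (fun n => ?_) (by simpa using hdiff.sqrt)
  rw [Real.le_sqrt (ha n) (div_nonneg (by nlinarith [h n, sq_nonneg (a n)]) hc.le), le_div_iff₀ hc]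
  linarith [h n]

lemma Finset.sum_filter_lt_add_add_sum_filter_gt {ι N : Type*} [Fintype ι] [LinearOrder ι]
    [AddCommMonoid N] (k : ι) (f : ι → N) :
    (∑ j ∈ Finset.univ.filter (fun j => j < k), f j) + f k
      + ∑ j ∈ Finset.univ.filter (fun j => k < j), f j = ∑ j, f j := by
  rw [← Finset.add_sum_erase _ _ (Finset.mem_univ k), add_comm _ (f k), add_assoc,
    ← Finset.sum_union (Finset.disjoint_filter.2 fun j _ h₁ h₂ => lt_asymm h₁ h₂)]
  congr 2
  ext j
  simp [lt_or_lt_iff_ne]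

section BlockCoordinates

variable {K : ℕ} {E : Fin K → Type*}

def blockMix (x' x : ∀ k, E k) (i : ℕ) : ∀ k, E k := fun k => if (k : ℕ) < i then x' k else x k

lemma add_sum_le_of_blockMix_succ_le {F : (∀ k, E k) → ℝ} {δ : Fin K → ℝ} {x' x : ∀ k, E k}
    (h : ∀ k : Fin K, F (blockMix x' x (k + 1)) + δ k ≤ F (blockMix x' x k)) :
    F x' + ∑ k, δ k ≤ F x := by
  have hsum : ∑ k, δ k ≤ ∑ k : Fin K, (F (blockMix x' x k) - F (blockMix x' x (k + 1))) :=
    Finset.sum_le_sum fun k _ => by linarith [h k]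
  rw [Fin.sum_univ_eq_sum_range (fun i => F (blockMix x' x i) - F (blockMix x' x (i + 1))),
    Finset.sum_range_sub'] at hsum
  have h₀ : blockMix x' x 0 = x := funext fun k => if_neg (Nat.not_lt_zero _)
  have hK : blockMix x' x K = x' := funext fun k => if_pos k.isLt
  rw [h₀, hK] at hsum
  linarith

end BlockCoordinates

section BlockObjective

variable {E F : Type*} [NormedAddCommGroup E] [InnerProductSpace ℝ E] [NormedAddCommGroup F]
  [InnerProductSpace ℝ F]

/-- Objective of the `x_k`-subproblem of the ADMM, `c` collecting `x_0` minus the other blocks. -/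
noncomputable def blockObjective (gk : E → ℝ) (Ak : E →L[ℝ] F) (ρ : ℝ) (y c : F) (z : E) : ℝ :=
  gk z - ⟪y, Ak z⟫ + ρ / 2 * ‖c - Ak z‖ ^ 2

lemma strongConvexOn_blockObjective {S : Set E} {m ρ : ℝ} {gk : E → ℝ} {Ak : E →L[ℝ] F}
    (hsc : StrongConvexOn S m (fun z => gk z + ρ / 2 * ‖Ak z‖ ^ 2)) (y c : F) :
    StrongConvexOn S m (blockObjective gk Ak ρ y c) := by
  convert hsc.add_linear_add_const (-((innerSL ℝ (y + ρ • c)).comp Ak).toLinearMap)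
    (ρ / 2 * ‖c‖ ^ 2) using 1
  ext z
  simp only [blockObjective, norm_sub_sq_real, LinearMap.neg_apply, ContinuousLinearMap.coe_coe,
    ContinuousLinearMap.comp_apply, innerSL_apply_apply, inner_add_left, real_inner_smul_left]
  ring

lemma Filter.Tendsto.blockObjective {ι : Type*} {p : Filter ι} {gk : E → ℝ} (hg : Continuous gk)
    (Ak : E →L[ℝ] F) (ρ : ℝ) {yt ct : ι → F} {zt : ι → E} {y c : F} {z : E}
    (hy : Tendsto yt p (𝓝 y)) (hc : Tendsto ct p (𝓝 c)) (hz : Tendsto zt p (𝓝 z)) :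
    Tendsto (fun t => blockObjective gk Ak ρ (yt t) (ct t) (zt t)) p
      (𝓝 (blockObjective gk Ak ρ y c z)) := by
  have hAz := (Ak.continuous.tendsto z).comp hz
  exact (((hg.tendsto z).comp hz).sub (hy.inner hAz)).add
    (((hc.sub hAz).norm.pow 2).const_mul (ρ / 2))

lemma le_add_sq_of_blockObjective_le {gk : E → ℝ} {Ak : E →L[ℝ] F} {ρ : ℝ} (hρ : 0 ≤ ρ)
    {y : F} {a z : E} (h : blockObjective gk Ak ρ y (Ak a) a ≤ blockObjective gk Ak ρ y (Ak a) z) :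
    gk a - ⟪y, Ak a⟫ ≤ gk z - ⟪y, Ak z⟫ + ρ / 2 * ‖Ak‖ ^ 2 * ‖z - a‖ ^ 2 := by
  have hA : ‖Ak a - Ak z‖ ^ 2 ≤ ‖Ak‖ ^ 2 * ‖z - a‖ ^ 2 := by
    rw [← mul_pow, ← map_sub, norm_sub_rev]
    exact pow_le_pow_left₀ (norm_nonneg _) (Ak.le_opNorm _) 2
  simp only [blockObjective, sub_self, norm_zero] at h
  nlinarith

lemma ConvexOn.sub_inner_le_of_forall_blockObjective_le {S : Set E} {gk : E → ℝ}
    (hg : ConvexOn ℝ S gk) {Ak : E →L[ℝ] F} {ρ : ℝ} (hρ : 0 ≤ ρ) {y : F} {a : E} (ha : a ∈ S)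
    (hmin : ∀ z ∈ S, blockObjective gk Ak ρ y (Ak a) a ≤ blockObjective gk Ak ρ y (Ak a) z)
    {z : E} (hz : z ∈ S) : gk a - ⟪y, Ak a⟫ ≤ gk z - ⟪y, Ak z⟫ :=
  (hg.sub (((innerSL ℝ y).comp Ak).toLinearMap.concaveOn hg.1)).le_of_forall_le_add_sq ha
    (fun w hw => le_add_sq_of_blockObjective_le hρ (hmin w hw)) hz

lemma HasGradientAt.inner_sub_inner_nonneg_of_forall_blockObjective_le [CompleteSpace E]
    {S : Set E} (hS : Convex ℝ S) {gk : E → ℝ} {G a : E} (hg : HasGradientAt gk G a)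
    {Ak : E →L[ℝ] F} {ρ : ℝ} (hρ : 0 ≤ ρ) {y : F} (ha : a ∈ S)
    (hmin : ∀ z ∈ S, blockObjective gk Ak ρ y (Ak a) a ≤ blockObjective gk Ak ρ y (Ak a) z)
    {z : E} (hz : z ∈ S) : 0 ≤ ⟪z - a, G⟫ - ⟪Ak (z - a), y⟫ := by
  have hder := hg.hasFDerivAt.sub ((innerSL ℝ y).comp Ak).hasFDerivAt
  have := hder.nonneg_of_forall_le_add_sq hS ha
    (fun w hw => le_add_sq_of_blockObjective_le hρ (hmin w hw)) hz
  simpa [real_inner_comm] using this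

end BlockObjective

section AugmentedLagrangian

variable {M K : ℕ} {Nv : Fin K → ℕ} (g : ∀ k : Fin K, EuclideanSpace ℝ (Fin (Nv k)) → ℝ)
  (l : EuclideanSpace ℝ (Fin M) → ℝ) (ρ : ℝ)
  (A : ∀ k : Fin K, EuclideanSpace ℝ (Fin (Nv k)) →L[ℝ] EuclideanSpace ℝ (Fin M))

/-- What `A k x_k` is fitted to in the `x_k`-step of a Gauss–Seidel sweep from `w` to `w'`. -/
noncomputable def blockTarget (x0 : EuclideanSpace ℝ (Fin M))
    (w' w : ∀ k, EuclideanSpace ℝ (Fin (Nv k))) (k : Fin K) : EuclideanSpace ℝ (Fin M) :=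
  x0 - (∑ j ∈ Finset.univ.filter (fun j => j < k), A j (w' j))
    - ∑ j ∈ Finset.univ.filter (fun j => k < j), A j (w j)

lemma augLs_eq_blockObjective_add (w : ∀ k, EuclideanSpace ℝ (Fin (Nv k)))
    (x0 y : EuclideanSpace ℝ (Fin M)) (k : Fin K) :
    augLs g l ρ A w x0 y
      = blockObjective (g k) (A k) ρ y (blockTarget A x0 w w k) (w k)
        + ((∑ j ∈ Finset.univ.filter (fun j => j < k), g j (w j))
          + (∑ j ∈ Finset.univ.filter (fun j => k < j), g j (w j)) + l x0
          + ⟪blockTarget A x0 w w k, y⟫) := by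
  rw [augLs, blockObjective, blockTarget, ← Finset.sum_filter_lt_add_add_sum_filter_gt k,
    ← Finset.sum_filter_lt_add_add_sum_filter_gt k (fun j => A j (w j)),
    show ∀ a b c : EuclideanSpace ℝ (Fin M), x0 - (a + b + c) = x0 - a - c - b by
      intros; abel, inner_sub_left, real_inner_comm (A k (w k))]
  ring

lemma augLs_sub_augLs_of_eq_of_ne {w' w : ∀ k, EuclideanSpace ℝ (Fin (Nv k))} {k : Fin K}
    (hw : ∀ j, j ≠ k → w' j = w j) (x0 y : EuclideanSpace ℝ (Fin M)) :
    augLs g l ρ A w' x0 y - augLs g l ρ A w x0 y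
      = blockObjective (g k) (A k) ρ y (blockTarget A x0 w w k) (w' k)
        - blockObjective (g k) (A k) ρ y (blockTarget A x0 w w k) (w k) := by
  have hlt : ∀ j ∈ Finset.univ.filter (fun j => j < k), w' j = w j :=
    fun j hj => hw j (Finset.mem_filter.1 hj).2.ne
  have hgt : ∀ j ∈ Finset.univ.filter (fun j => k < j), w' j = w j :=
    fun j hj => hw j (Finset.mem_filter.1 hj).2.ne'
  rw [augLs_eq_blockObjective_add g l ρ A w' x0 y k, augLs_eq_blockObjective_add g l ρ A w x0 y k]
  simp only [blockTarget]
  rw [Finset.sum_congr rfl fun j hj => congrArg (A j) (hlt j hj),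
    Finset.sum_congr rfl fun j hj => congrArg (A j) (hgt j hj),
    Finset.sum_congr rfl fun j hj => congrArg (g j) (hlt j hj),
    Finset.sum_congr rfl fun j hj => congrArg (g j) (hgt j hj)]
  ring

lemma augLs_add_sum_le_of_sweep {X : ∀ k, Set (EuclideanSpace ℝ (Fin (Nv k)))} {γ : Fin K → ℝ}
    (hsc : ∀ k, StrongConvexOn (X k) (γ k) (fun z => g k z + ρ / 2 * ‖A k z‖ ^ 2))
    {x' x : ∀ k, EuclideanSpace ℝ (Fin (Nv k))} {x0 y : EuclideanSpace ℝ (Fin M)}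
    (hx : ∀ k, x k ∈ X k)
    (hupd : ∀ k, (x' k ∈ X k ∧ ∀ z ∈ X k,
      blockObjective (g k) (A k) ρ y (blockTarget A x0 x' x k) (x' k)
        ≤ blockObjective (g k) (A k) ρ y (blockTarget A x0 x' x k) z) ∨ x' k = x k) :
    augLs g l ρ A x' x0 y + ∑ k, γ k / 2 * ‖x' k - x k‖ ^ 2 ≤ augLs g l ρ A x x0 y := by
  refine add_sum_le_of_blockMix_succ_le (F := fun w => augLs g l ρ A w x0 y) fun k => ?_
  have hoff : ∀ j, j ≠ k → blockMix x' x (k + 1) j = blockMix x' x k j := by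
    intro j hj
    have : ((j : ℕ) < k + 1 ↔ (j : ℕ) < k) := by
      have := Fin.val_ne_of_ne hj; omega
    simp only [blockMix, this]
  have hstep := augLs_sub_augLs_of_eq_of_ne g l ρ A hoff x0 y
  have htarget : blockTarget A x0 (blockMix x' x k) (blockMix x' x k) k
      = blockTarget A x0 x' x k := by
    rw [blockTarget, blockTarget,
      Finset.sum_congr rfl fun j hj => show A j (blockMix x' x k j) = A j (x' j) by
        rw [blockMix, if_pos (Fin.lt_def.1 (Finset.mem_filter.1 hj).2)],
      Finset.sum_congr rfl fun j hj => show A j (blockMix x' x k j) = A j (x j) by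
        rw [blockMix, if_neg (Fin.lt_def.1 (Finset.mem_filter.1 hj).2).not_gt]]
  have hnew : blockMix x' x (k + 1) k = x' k := if_pos (Nat.lt_succ_self _)
  have hold : blockMix x' x k k = x k := if_neg (lt_irrefl _)
  rw [htarget, hnew, hold] at hstep
  rcases hupd k with ⟨hmem, hmin⟩ | hstay
  · have := (strongConvexOn_blockObjective (hsc k) _ _).add_sq_le_of_forall_le hmem hmin (hx k)
    rw [norm_sub_rev] at this
    linarith
  · rw [hstay, sub_self] at hstep
    rw [hstay, sub_self, norm_zero]
    linarith

lemma augLs_add_sq_le_of_x0_step {γ L : ℝ}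
    (hsc : StrongConvexOn Set.univ γ (fun z : EuclideanSpace ℝ (Fin M) => l z + ρ / 2 * ‖z‖ ^ 2))
    (hρ : 0 < ρ) {w : ∀ k, EuclideanSpace ℝ (Fin (Nv k))} {x0 x0' y y' : EuclideanSpace ℝ (Fin M)}
    (hmin : ∀ z, l x0' + ⟪y, x0'⟫ + ρ / 2 * ‖x0' - ∑ k, A k (w k)‖ ^ 2
      ≤ l z + ⟪y, z⟫ + ρ / 2 * ‖z - ∑ k, A k (w k)‖ ^ 2)
    (hy' : y' = y + ρ • (x0' - ∑ k, A k (w k))) (hdy : ‖y' - y‖ ≤ L * ‖x0' - x0‖) :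
    augLs g l ρ A w x0' y' + (γ / 2 - L ^ 2 / ρ) * ‖x0' - x0‖ ^ 2 ≤ augLs g l ρ A w x0 y := by
  set s := ∑ k, A k (w k)
  have hsc' : StrongConvexOn Set.univ γ (fun z => l z + ⟪y, z⟫ + ρ / 2 * ‖z - s‖ ^ 2) := by
    have hfun : (fun z => l z + ⟪y, z⟫ + ρ / 2 * ‖z - s‖ ^ 2) = fun z => l z + ρ / 2 * ‖z‖ ^ 2
        + ((innerSL ℝ (y - ρ • s)).toLinearMap z + ρ / 2 * ‖s‖ ^ 2) := by
      funext z
      simp only [norm_sub_sq_real, ContinuousLinearMap.coe_coe, innerSL_apply_apply,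
        inner_sub_left, real_inner_smul_left, real_inner_comm s]
      ring
    rw [hfun]
    exact hsc.add_linear_add_const _ _
  have hx0 := hsc'.add_sq_le_of_forall_le (Set.mem_univ x0') (fun z _ => hmin z) (Set.mem_univ x0)
  have hdual : ρ * ‖x0' - s‖ ≤ L * ‖x0' - x0‖ := by
    rwa [hy', add_sub_cancel_left, norm_smul, Real.norm_of_nonneg hρ.le] at hdy
  have hdual_sq : ρ * ‖x0' - s‖ ^ 2 ≤ L ^ 2 / ρ * ‖x0' - x0‖ ^ 2 := by
    rw [div_mul_eq_mul_div, le_div_iff₀ hρ, ← mul_pow]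
    nlinarith [pow_le_pow_left₀ (by positivity) hdual 2]
  have hinc : augLs g l ρ A w x0' y' = augLs g l ρ A w x0' y + ρ * ‖x0' - s‖ ^ 2 := by
    rw [augLs, augLs, hy', inner_add_right, real_inner_smul_right, real_inner_self_eq_norm_sq]
    ring
  have hx0' : ∀ v, augLs g l ρ A w v y = (l v + ⟪y, v⟫ + ρ / 2 * ‖v - s‖ ^ 2)
      + ((∑ k, g k (w k)) - ⟪y, s⟫) := fun v => by
    rw [augLs, inner_sub_left, real_inner_comm v, real_inner_comm s]
    ring
  rw [hinc, hx0', hx0']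
  rw [norm_sub_rev x0 x0'] at hx0
  linarith

lemma sum_add_le_augLs_of_eq_neg_grad {l' : EuclideanSpace ℝ (Fin M) → EuclideanSpace ℝ (Fin M)}
    {L : ℝ} (hgrad : ∀ z, HasGradientAt l (l' z) z) (hLip : ∀ u v, ‖l' u - l' v‖ ≤ L * ‖u - v‖)
    (hLρ : L ≤ ρ) (w : ∀ k, EuclideanSpace ℝ (Fin (Nv k))) (x0 : EuclideanSpace ℝ (Fin M)) :
    (∑ k, g k (w k)) + l (∑ k, A k (w k)) ≤ augLs g l ρ A w x0 (-l' x0) := by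
  have hl := le_add_inner_add_sq_of_lipschitz_gradient hgrad hLip x0 (∑ k, A k (w k))
  rw [augLs, inner_neg_right, real_inner_comm, ← inner_neg_right, neg_sub, norm_sub_rev]
  nlinarith [sq_nonneg ‖∑ k, A k (w k) - x0‖]

end AugmentedLagrangian

/-- The iterates of Algorithm 4, the block `x_0` being indexed by `none`; `C (t + 1)` is the set
of blocks updated in the step from `t` to `t + 1`. -/
structure IsFlexibleADMM {M K : ℕ} {Nv : Fin K → ℕ}
    (g : ∀ k : Fin K, EuclideanSpace ℝ (Fin (Nv k)) → ℝ) (l : EuclideanSpace ℝ (Fin M) → ℝ)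
    (A : ∀ k : Fin K, EuclideanSpace ℝ (Fin (Nv k)) →L[ℝ] EuclideanSpace ℝ (Fin M))
    (X : ∀ k : Fin K, Set (EuclideanSpace ℝ (Fin (Nv k)))) (ρ : ℝ)
    (x : ℕ → ∀ k : Fin K, EuclideanSpace ℝ (Fin (Nv k))) (x0 y : ℕ → EuclideanSpace ℝ (Fin M))
    (C : ℕ → Finset (Option (Fin K))) : Prop where
  start : C 1 = Finset.univ
  x_update : ∀ (t : ℕ) (k : Fin K),
    (some k ∈ C (t + 1) → x (t + 1) k ∈ X k ∧ ∀ z ∈ X k,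
      blockObjective (g k) (A k) ρ (y t) (blockTarget A (x0 t) (x (t + 1)) (x t) k) (x (t + 1) k)
        ≤ blockObjective (g k) (A k) ρ (y t) (blockTarget A (x0 t) (x (t + 1)) (x t) k) z) ∧
    (some k ∉ C (t + 1) → x (t + 1) k = x t k)
  x0_update : ∀ t : ℕ,
    (none ∈ C (t + 1) → ∀ z : EuclideanSpace ℝ (Fin M),
      l (x0 (t + 1)) + ⟪y t, x0 (t + 1)⟫ + ρ / 2 * ‖x0 (t + 1) - ∑ k, A k (x (t + 1) k)‖ ^ 2
        ≤ l z + ⟪y t, z⟫ + ρ / 2 * ‖z - ∑ k, A k (x (t + 1) k)‖ ^ 2) ∧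
    (none ∉ C (t + 1) → x0 (t + 1) = x0 t)
  y_update : ∀ t : ℕ,
    (none ∈ C (t + 1) → y (t + 1) = y t + ρ • (x0 (t + 1) - ∑ k, A k (x (t + 1) k))) ∧
    (none ∉ C (t + 1) → y (t + 1) = y t)

namespace IsFlexibleADMM

variable {M K : ℕ} {Nv : Fin K → ℕ} {g : ∀ k : Fin K, EuclideanSpace ℝ (Fin (Nv k)) → ℝ}
  {l : EuclideanSpace ℝ (Fin M) → ℝ} {l' : EuclideanSpace ℝ (Fin M) → EuclideanSpace ℝ (Fin M)}
  {A : ∀ k : Fin K, EuclideanSpace ℝ (Fin (Nv k)) →L[ℝ] EuclideanSpace ℝ (Fin M)}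
  {X : ∀ k : Fin K, Set (EuclideanSpace ℝ (Fin (Nv k)))} {ρ L : ℝ}
  {x : ℕ → ∀ k : Fin K, EuclideanSpace ℝ (Fin (Nv k))} {x0 y : ℕ → EuclideanSpace ℝ (Fin M)}
  {C : ℕ → Finset (Option (Fin K))}

theorem mem (h : IsFlexibleADMM g l A X ρ x x0 y C) {t : ℕ} (ht : 1 ≤ t) (k : Fin K) :
    x t k ∈ X k := by
  induction t, ht using Nat.le_induction with
  | base => exact ((h.x_update 0 k).1 (by simp [h.start])).1
  | succ t _ ih =>
    by_cases hk : some k ∈ C (t + 1)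
    · exact ((h.x_update t k).1 hk).1
    · rw [(h.x_update t k).2 hk]
      exact ih

/-- The first-order condition of the `x_0`-step reads `∇ℓ(x_0^{t+1}) + y^{t+1} = 0`. -/
theorem dual_eq_neg_grad (h : IsFlexibleADMM g l A X ρ x x0 y C)
    (hgrad : ∀ z, HasGradientAt l (l' z) z) {t : ℕ} (ht : 1 ≤ t) : y t = -l' (x0 t) := by
  have hstep : ∀ t, none ∈ C (t + 1) → y (t + 1) = -l' (x0 (t + 1)) := fun t h0 => by
    refine eq_neg_of_add_eq_zero_right ?_
    rw [(h.y_update t).1 h0, ← add_assoc]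
    exact (hgrad _).add_add_smul_sub_eq_zero_of_forall_le ((h.x0_update t).1 h0)
  induction t, ht using Nat.le_induction with
  | base => exact hstep 0 (by simp [h.start])
  | succ t _ ih =>
    by_cases h0 : none ∈ C (t + 1)
    · exact hstep t h0
    · rw [(h.y_update t).2 h0, (h.x0_update t).2 h0, ih]

theorem augLs_descent (h : IsFlexibleADMM g l A X ρ x x0 y C)
    (hgrad : ∀ z, HasGradientAt l (l' z) z) (hLip : ∀ u v, ‖l' u - l' v‖ ≤ L * ‖u - v‖)
    (hρ : 0 < ρ) {γk : Fin K → ℝ} {γ : ℝ}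
    (hstrongk : ∀ k, StrongConvexOn (X k) (γk k) (fun z => g k z + ρ / 2 * ‖A k z‖ ^ 2))
    (hstrong0 : StrongConvexOn Set.univ γ
      (fun z : EuclideanSpace ℝ (Fin M) => l z + ρ / 2 * ‖z‖ ^ 2)) {t : ℕ} (ht : 1 ≤ t) :
    augLs g l ρ A (x (t + 1)) (x0 (t + 1)) (y (t + 1))
        + ∑ k, γk k / 2 * ‖x (t + 1) k - x t k‖ ^ 2
        + (γ / 2 - L ^ 2 / ρ) * ‖x0 (t + 1) - x0 t‖ ^ 2
      ≤ augLs g l ρ A (x t) (x0 t) (y t) := by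
  have hsweep := augLs_add_sum_le_of_sweep g l ρ A hstrongk (h.mem ht) fun k => by
    by_cases hk : some k ∈ C (t + 1)
    · exact Or.inl ((h.x_update t k).1 hk)
    · exact Or.inr ((h.x_update t k).2 hk)
  by_cases h0 : none ∈ C (t + 1)
  · have hdy : ‖y (t + 1) - y t‖ ≤ L * ‖x0 (t + 1) - x0 t‖ := by
      rw [h.dual_eq_neg_grad hgrad (by omega), h.dual_eq_neg_grad hgrad ht, neg_sub_neg,
        norm_sub_rev]
      exact hLip _ _
    have hx0 := augLs_add_sq_le_of_x0_step g l ρ A hstrong0 hρ ((h.x0_update t).1 h0)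
      ((h.y_update t).1 h0) hdy
    linarith
  · rw [(h.x0_update t).2 h0, (h.y_update t).2 h0, sub_self, norm_zero]
    linarith [hsweep]

theorem bddBelow_augLs (h : IsFlexibleADMM g l A X ρ x x0 y C)
    (hgrad : ∀ z, HasGradientAt l (l' z) z) (hLip : ∀ u v, ‖l' u - l' v‖ ≤ L * ‖u - v‖)
    (hLρ : L ≤ ρ) (hbdd : BddBelow ((fun xx : ∀ k : Fin K, EuclideanSpace ℝ (Fin (Nv k)) =>
      (∑ k, g k (xx k)) + l (∑ k, A k (xx k))) '' {xx | ∀ k, xx k ∈ X k})) :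
    BddBelow (Set.range fun n => augLs g l ρ A (x (n + 1)) (x0 (n + 1)) (y (n + 1))) := by
  obtain ⟨c, hc⟩ := hbdd
  refine ⟨c, ?_⟩
  rintro _ ⟨n, rfl⟩
  dsimp only
  rw [h.dual_eq_neg_grad hgrad (Nat.le_add_left 1 n)]
  exact (hc ⟨x (n + 1), fun k => h.mem (Nat.le_add_left 1 n) k, rfl⟩).trans
    (sum_add_le_augLs_of_eq_neg_grad g l ρ A hgrad hLip hLρ _ _)

theorem tendsto_increments (h : IsFlexibleADMM g l A X ρ x x0 y C)
    (hgrad : ∀ z, HasGradientAt l (l' z) z) (hLip : ∀ u v, ‖l' u - l' v‖ ≤ L * ‖u - v‖)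
    (hρ : 0 < ρ) {γk : Fin K → ℝ} {γ : ℝ} (hγk : ∀ k, 0 < γk k)
    (hstrongk : ∀ k, StrongConvexOn (X k) (γk k) (fun z => g k z + ρ / 2 * ‖A k z‖ ^ 2))
    (hstrong0 : StrongConvexOn Set.univ γ
      (fun z : EuclideanSpace ℝ (Fin M) => l z + ρ / 2 * ‖z‖ ^ 2))
    (hLγ : 2 * L ^ 2 < ρ * γ) (hLρ : L ≤ ρ)
    (hbdd : BddBelow ((fun xx : ∀ k : Fin K, EuclideanSpace ℝ (Fin (Nv k)) =>
      (∑ k, g k (xx k)) + l (∑ k, A k (xx k))) '' {xx | ∀ k, xx k ∈ X k})) :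
    (∀ k, Tendsto (fun n => x (n + 1) k - x n k) atTop (𝓝 0)) ∧
      Tendsto (fun n => x0 (n + 1) - x0 n) atTop (𝓝 0) ∧
      Tendsto (fun n => y (n + 1) - y n) atTop (𝓝 0) := by
  have hV := h.bddBelow_augLs hgrad hLip hLρ hbdd
  have hdesc := fun n : ℕ =>
    h.augLs_descent hgrad hLip hρ hstrongk hstrong0 (Nat.le_add_left 1 n)
  have hβ : 0 < γ / 2 - L ^ 2 / ρ := by
    rw [sub_pos, div_lt_div_iff₀ hρ two_pos]
    linarith
  have hterm : ∀ n k, 0 ≤ γk k / 2 * ‖x (n + 1) k - x n k‖ ^ 2 :=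
    fun n k => mul_nonneg (half_pos (hγk k)).le (sq_nonneg _)
  have hdx0 : Tendsto (fun n => ‖x0 (n + 1) - x0 n‖) atTop (𝓝 0) := by
    refine (tendsto_add_atTop_iff_nat 1).1 (tendsto_zero_of_mul_sq_le_sub_succ hβ hV
      (fun n => norm_nonneg _) fun n => ?_)
    linarith [hdesc n, Finset.sum_nonneg fun k (_ : k ∈ Finset.univ) => hterm (n + 1) k]
  refine ⟨fun k => ?_, tendsto_zero_iff_norm_tendsto_zero.2 hdx0, ?_⟩
  · refine tendsto_zero_iff_norm_tendsto_zero.2 <| (tendsto_add_atTop_iff_nat 1).1 <|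
      tendsto_zero_of_mul_sq_le_sub_succ (half_pos (hγk k)) hV (fun n => norm_nonneg _)
        fun n => ?_
    have hk := Finset.single_le_sum (fun j _ => hterm (n + 1) j) (Finset.mem_univ k)
    nlinarith [hdesc n, sq_nonneg ‖x0 (n + 1 + 1) - x0 (n + 1)‖]
  · refine tendsto_zero_iff_norm_tendsto_zero.2 <| squeeze_zero' (Eventually.of_forall
      fun n => norm_nonneg _) ?_ (by simpa using hdx0.const_mul L)
    filter_upwards [eventually_ge_atTop 1] with n hn
    rw [h.dual_eq_neg_grad hgrad hn, h.dual_eq_neg_grad hgrad (by omega), neg_sub_neg,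
      norm_sub_rev]
    exact hLip _ _

/-- At a step updating `x_0` the residual equals `-(y^{t+1} - y^t) / ρ`, and the cyclic rule
puts such a step at most `T` iterations ahead. -/
theorem tendsto_residual (h : IsFlexibleADMM g l A X ρ x x0 y C) (hρ : 0 < ρ) {T : ℕ}
    (hcyc : ∀ (t : ℕ) (j : Option (Fin K)), ∃ i, 1 ≤ i ∧ i ≤ T ∧ j ∈ C (t + i))
    (hdx : ∀ k, Tendsto (fun n => x (n + 1) k - x n k) atTop (𝓝 0))
    (hdx0 : Tendsto (fun n => x0 (n + 1) - x0 n) atTop (𝓝 0))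
    (hdy : Tendsto (fun n => y (n + 1) - y n) atTop (𝓝 0)) :
    Tendsto (fun t => (∑ k, A k (x t k)) - x0 t) atTop (𝓝 0) := by
  set r := fun t => (∑ k, A k (x t k)) - x0 t
  have hdr : Tendsto (fun t => r (t + 1) - r t) atTop (𝓝 0) := by
    have := (tendsto_finsetSum Finset.univ fun k _ =>
      ((A k).continuous.tendsto 0).comp (hdx k)).sub hdx0
    simp only [Function.comp_def, map_sub, map_zero, Finset.sum_const_zero, sub_zero] at this
    refine this.congr fun t => ?_
    simp only [r, Finset.sum_sub_distrib]
    abel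
  choose i hi₁ hiT hi using fun t => hcyc t none
  obtain ⟨τ, hτ⟩ : ∃ τ : ℕ → ℕ, ∀ t, τ t + 1 = t + i t :=
    ⟨fun t => t + i t - 1, fun t => by have := hi₁ t; dsimp only; omega⟩
  have hrτ : Tendsto (fun t => r (τ t + 1)) atTop (𝓝 0) := by
    have hτ_top : Tendsto τ atTop atTop :=
      tendsto_atTop_mono (fun t => show t ≤ τ t by have := hτ t; have := hi₁ t; omega) tendsto_id
    refine (by simpa using (hdy.comp hτ_top).const_smul (-ρ⁻¹) :
      Tendsto (fun t => -ρ⁻¹ • (y (τ t + 1) - y (τ t))) atTop (𝓝 0)).congr fun t => ?_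
    rw [(h.y_update (τ t)).1 (by rw [hτ]; exact hi t), add_sub_cancel_left, smul_smul,
      neg_mul, inv_mul_cancel₀ hρ.ne', neg_one_smul, neg_sub]
  have hlag := tendsto_sub_of_bounded_lag hdr (tendsto_add_atTop_nat 1)
    (σ := fun t => τ t + 1) (T := T) (fun t => by rw [hτ]; have := hi₁ t; omega)
    (fun t => by rw [hτ]; have := hiT t; omega)
  exact (tendsto_add_atTop_iff_nat 1).1 (by simpa using hrτ.sub hlag)

theorem grad_add_eq_zero_of_tendsto (h : IsFlexibleADMM g l A X ρ x x0 y C)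
    (hgrad : ∀ z, HasGradientAt l (l' z) z) (hLip : ∀ u v, ‖l' u - l' v‖ ≤ L * ‖u - v‖)
    {φ : ℕ → ℕ} (hφ : Tendsto φ atTop atTop) {x0s ys : EuclideanSpace ℝ (Fin M)}
    (hx0lim : Tendsto (fun t => x0 (φ t)) atTop (𝓝 x0s))
    (hylim : Tendsto (fun t => y (φ t)) atTop (𝓝 ys)) : l' x0s + ys = 0 := by
  have hl' : Tendsto (fun t => l' (x0 (φ t))) atTop (𝓝 (l' x0s)) := by
    refine tendsto_iff_norm_sub_tendsto_zero.2 <| squeeze_zero (fun t => norm_nonneg _)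
      (fun t => hLip _ _) ?_
    simpa using (tendsto_iff_norm_sub_tendsto_zero.1 hx0lim).const_mul L
  have hy : Tendsto (fun t => y (φ t)) atTop (𝓝 (-l' x0s)) :=
    hl'.neg.congr' <| (hφ.eventually_ge_atTop 1).mono fun t ht =>
      (h.dual_eq_neg_grad hgrad ht).symm
  rw [tendsto_nhds_unique hylim hy, add_neg_cancel]

/-- Along the subsequence, the block `k` is updated within `T` steps; the iterates around that
update have the same limit, so its optimality passes to the limit point. -/
theorem blockObjective_le_of_tendsto (h : IsFlexibleADMM g l A X ρ x x0 y C) {T : ℕ}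
    (hcyc : ∀ (t : ℕ) (j : Option (Fin K)), ∃ i, 1 ≤ i ∧ i ≤ T ∧ j ∈ C (t + i))
    (hg : ∀ k, Continuous (g k)) (hXcl : ∀ k, IsClosed (X k))
    (hdx : ∀ k, Tendsto (fun n => x (n + 1) k - x n k) atTop (𝓝 0))
    (hdx0 : Tendsto (fun n => x0 (n + 1) - x0 n) atTop (𝓝 0))
    (hdy : Tendsto (fun n => y (n + 1) - y n) atTop (𝓝 0))
    {φ : ℕ → ℕ} (hφ : Tendsto φ atTop atTop) {xs : ∀ k, EuclideanSpace ℝ (Fin (Nv k))}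
    {x0s ys : EuclideanSpace ℝ (Fin M)}
    (hxlim : ∀ k, Tendsto (fun t => x (φ t) k) atTop (𝓝 (xs k)))
    (hx0lim : Tendsto (fun t => x0 (φ t)) atTop (𝓝 x0s))
    (hylim : Tendsto (fun t => y (φ t)) atTop (𝓝 ys)) (hsum : ∑ k, A k (xs k) = x0s)
    (k : Fin K) :
    xs k ∈ X k ∧ ∀ z ∈ X k, blockObjective (g k) (A k) ρ ys (A k (xs k)) (xs k)
      ≤ blockObjective (g k) (A k) ρ ys (A k (xs k)) z := by
  choose i hi₁ hiT hi using fun t => hcyc (φ t) (some k)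
  obtain ⟨p, hp⟩ : ∃ p : ℕ → ℕ, ∀ t, p t + 1 = φ t + i t :=
    ⟨fun t => φ t + i t - 1, fun t => by have := hi₁ t; dsimp only; omega⟩
  have hupd := fun t => (h.x_update (p t) k).1 (by rw [hp]; exact hi t)
  have hlag₀ : ∀ t, φ t ≤ p t := fun t => by have := hp t; have := hi₁ t; omega
  have hlag₁ : ∀ t, p t ≤ φ t + T := fun t => by have := hp t; have := hiT t; omega
  have hxp : ∀ j, Tendsto (fun t => x (p t) j) atTop (𝓝 (xs j)) := fun j =>
    (hxlim j).comp_of_bounded_lag (u := fun n => x n j) (hdx j) hφ hlag₀ hlag₁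
  have hxp₁ : ∀ j, Tendsto (fun t => x (p t + 1) j) atTop (𝓝 (xs j)) := fun j =>
    (hxlim j).comp_of_bounded_lag (u := fun n => x n j) (σ := fun t => p t + 1) (T := T) (hdx j)
      hφ (fun t => (hlag₀ t).trans (Nat.le_succ _)) fun t => by have := hp t; have := hiT t; omega
  have hyp := hylim.comp_of_bounded_lag (u := y) hdy hφ hlag₀ hlag₁
  have hc : Tendsto (fun t => blockTarget A (x0 (p t)) (x (p t + 1)) (x (p t)) k) atTop
      (𝓝 (A k (xs k))) := by
    simp only [blockTarget]
    have := ((hx0lim.comp_of_bounded_lag (u := x0) hdx0 hφ hlag₀ hlag₁).sub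
      (tendsto_finsetSum (Finset.univ.filter (fun j => j < k))
        fun j _ => ((A j).continuous.tendsto _).comp (hxp₁ j))).sub
      (tendsto_finsetSum (Finset.univ.filter (fun j => k < j))
        fun j _ => ((A j).continuous.tendsto _).comp (hxp j))
    rwa [← hsum, ← Finset.sum_filter_lt_add_add_sum_filter_gt k,
      show ∀ a b c : EuclideanSpace ℝ (Fin M), a + b + c - a - c = b by intros; abel] at this
  refine ⟨(hXcl k).mem_of_tendsto (hxp₁ k) (Eventually.of_forall fun t => (hupd t).1),
    fun z hz => ?_⟩
  exact le_of_tendsto_of_tendsto' (Tendsto.blockObjective (hg k) (A k) ρ hyp hc (hxp₁ k))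
    (Tendsto.blockObjective (hg k) (A k) ρ hyp hc tendsto_const_nhds) fun t => (hupd t).2 z hz

end IsFlexibleADMM

theorem theorem4_1_parts12_general
    {M K : ℕ} {Nv : Fin K → ℕ}
    (g : ∀ k : Fin K, EuclideanSpace ℝ (Fin (Nv k)) → ℝ)
    (l : EuclideanSpace ℝ (Fin M) → ℝ)
    (l' : EuclideanSpace ℝ (Fin M) → EuclideanSpace ℝ (Fin M))
    (A : ∀ k : Fin K, EuclideanSpace ℝ (Fin (Nv k)) →L[ℝ] EuclideanSpace ℝ (Fin M))
    (X : ∀ k : Fin K, Set (EuclideanSpace ℝ (Fin (Nv k))))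
    (Lc ρ : ℝ)
    (x : ℕ → ∀ k : Fin K, EuclideanSpace ℝ (Fin (Nv k)))
    (x0 y : ℕ → EuclideanSpace ℝ (Fin M))
    (C : ℕ → Finset (Option (Fin K)))
    -- Assumption C1
    (hgrad : ∀ z, HasGradientAt l (l' z) z)
    (hLip : ∀ u v, ‖l' u - l' v‖ ≤ Lc * ‖u - v‖)
    (hXcl : ∀ k, IsClosed (X k))
    (hXcv : ∀ k, Convex ℝ (X k))
    (hρ : 0 < ρ)
    -- Algorithm 4
    (hC1 : C 1 = Finset.univ)
    (hxupd : ∀ (t : ℕ) (k : Fin K),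
      (some k ∈ C (t + 1) → x (t + 1) k ∈ X k ∧ ∀ z ∈ X k,
        g k (x (t + 1) k) - ⟪y t, A k (x (t + 1) k)⟫
            + ρ / 2 * ‖x0 t - (∑ j ∈ Finset.univ.filter (fun j => j < k), A j (x (t + 1) j))
                - (∑ j ∈ Finset.univ.filter (fun j => k < j), A j (x t j))
                - A k (x (t + 1) k)‖ ^ 2
          ≤ g k z - ⟪y t, A k z⟫
            + ρ / 2 * ‖x0 t - (∑ j ∈ Finset.univ.filter (fun j => j < k), A j (x (t + 1) j))
                - (∑ j ∈ Finset.univ.filter (fun j => k < j), A j (x t j))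
                - A k z‖ ^ 2) ∧
      (some k ∉ C (t + 1) → x (t + 1) k = x t k))
    (hx0upd : ∀ t : ℕ,
      (none ∈ C (t + 1) → ∀ z : EuclideanSpace ℝ (Fin M),
        l (x0 (t + 1)) + ⟪y t, x0 (t + 1)⟫
            + ρ / 2 * ‖x0 (t + 1) - ∑ k, A k (x (t + 1) k)‖ ^ 2
          ≤ l z + ⟪y t, z⟫ + ρ / 2 * ‖z - ∑ k, A k (x (t + 1) k)‖ ^ 2) ∧
      (none ∉ C (t + 1) → x0 (t + 1) = x0 t))
    (hyupd : ∀ t : ℕ,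
      (none ∈ C (t + 1) →
        y (t + 1) = y t + ρ • (x0 (t + 1) - ∑ k, A k (x (t + 1) k))) ∧
      (none ∉ C (t + 1) → y (t + 1) = y t))
    -- Assumption C2
    (γk : Fin K → ℝ) (γρ : ℝ)
    (hγkpos : ∀ k, 0 < γk k)
    (hstrongk : ∀ k, StrongConvexOn (X k) (γk k)
      (fun z : EuclideanSpace ℝ (Fin (Nv k)) => g k z + ρ / 2 * ‖A k z‖ ^ 2))
    (hstrong0 : StrongConvexOn Set.univ γρ
      (fun z : EuclideanSpace ℝ (Fin M) => l z + ρ / 2 * ‖z‖ ^ 2))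
    (hC2b : 2 * Lc ^ 2 < ρ * γρ) (hC2c : Lc ≤ ρ)
    -- Assumption C4
    (KK : Finset (Fin K)) (Lgk : Fin K → ℝ)
    (gg' : ∀ k : Fin K, EuclideanSpace ℝ (Fin (Nv k)) → EuclideanSpace ℝ (Fin (Nv k)))
    (hKcvx : ∀ k ∈ KK, ConvexOn ℝ Set.univ (g k))
    (hKsm : ∀ k ∉ KK, (∀ z, HasGradientAt (g k) (gg' k z) z) ∧ 0 < Lgk k ∧
      ∀ u ∈ X k, ∀ v ∈ X k, ‖gg' k u - gg' k v‖ ≤ Lgk k * ‖u - v‖)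
    -- Assumption C3 : `f` is bounded below over the feasible set
    (hbdd : BddBelow ((fun xx : ∀ k : Fin K, EuclideanSpace ℝ (Fin (Nv k)) =>
      (∑ k, g k (xx k)) + l (∑ k, A k (xx k))) '' {xx | ∀ k, xx k ∈ X k}))
    -- period-T essentially cyclic rule
    (T : ℕ)
    (hcyc : ∀ (t : ℕ) (j : Option (Fin K)), ∃ i, 1 ≤ i ∧ i ≤ T ∧ j ∈ C (t + i)) :
    Tendsto (fun t : ℕ => ‖(∑ k, A k (x (t + 1) k)) - x0 (t + 1)‖) atTop (nhds 0) ∧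
    (∀ (xs : ∀ k : Fin K, EuclideanSpace ℝ (Fin (Nv k)))
        (x0s ys : EuclideanSpace ℝ (Fin M)) (φ : ℕ → ℕ), StrictMono φ →
      (∀ k, Tendsto (fun t => x (φ t) k) atTop (nhds (xs k))) →
      Tendsto (fun t => x0 (φ t)) atTop (nhds x0s) →
      Tendsto (fun t => y (φ t)) atTop (nhds ys) →
      (∀ k ∈ KK, xs k ∈ X k ∧ ∀ z ∈ X k,
        g k (xs k) - ⟪ys, A k (xs k)⟫ ≤ g k z - ⟪ys, A k z⟫) ∧
      (∀ k ∉ KK, xs k ∈ X k ∧ ∀ z ∈ X k,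
        0 ≤ ⟪z - xs k, gg' k (xs k)⟫ - ⟪A k (z - xs k), ys⟫) ∧
      l' x0s + ys = 0 ∧
      (∑ k, A k (xs k)) = x0s) := by
  have h : IsFlexibleADMM g l A X ρ x x0 y C := ⟨hC1, hxupd, hx0upd, hyupd⟩
  obtain ⟨hdx, hdx0, hdy⟩ :=
    h.tendsto_increments hgrad hLip hρ hγkpos hstrongk hstrong0 hC2b hC2c hbdd
  have hres := h.tendsto_residual hρ hcyc hdx hdx0 hdy
  refine ⟨tendsto_zero_iff_norm_tendsto_zero.1 (hres.comp (tendsto_add_atTop_nat 1)), ?_⟩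
  intro xs x0s ys φ hφ hxlim hx0lim hylim
  have hsum : ∑ k, A k (xs k) = x0s := sub_eq_zero.1 <| tendsto_nhds_unique
    ((tendsto_finsetSum _ fun k _ => ((A k).continuous.tendsto _).comp (hxlim k)).sub hx0lim)
    (hres.comp hφ.tendsto_atTop)
  have hg : ∀ k, Continuous (g k) := fun k => by
    by_cases hk : k ∈ KK
    · exact continuousOn_univ.1 ((hKcvx k hk).continuousOn isOpen_univ)
    · exact continuous_iff_continuousAt.2 fun z => ((hKsm k hk).1 z).differentiableAt.continuousAt
  have hmin := h.blockObjective_le_of_tendsto hcyc hg hXcl hdx hdx0 hdy hφ.tendsto_atTop hxlim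
    hx0lim hylim hsum
  refine ⟨fun k hk => ⟨(hmin k).1, fun z hz => ?_⟩, fun k hk => ⟨(hmin k).1, fun z hz => ?_⟩,
    h.grad_add_eq_zero_of_tendsto hgrad hLip hφ.tendsto_atTop hx0lim hylim, hsum⟩
  · exact ConvexOn.sub_inner_le_of_forall_blockObjective_le
      ((hKcvx k hk).subset (Set.subset_univ _) (hXcv k)) hρ.le (hmin k).1 (hmin k).2 hz
  · exact ((hKsm k hk).1 (xs k)).inner_sub_inner_nonneg_of_forall_blockObjective_le (hXcv k) hρ.le
      (hmin k).1 (hmin k).2 hz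

/-- **Theorem 4.1, parts 1 and 2** (essentially cyclic rule).  For the flexible ADMM
(Algorithm 4) on the sharing problem under the period-`T` essentially cyclic rule and
Assumption C: (1) `‖Σ_k A_k x_k^{t+1} − x_0^{t+1}‖ → 0`; (2) every limit point
`({x*_k}, x*_0, y*)` of the iterates is a stationary solution of the reformulated sharing
problem. -/
theorem theorem4_1_parts12
    {M K : ℕ} {Nv : Fin K → ℕ} (hK : 1 ≤ K)
    (g : ∀ k : Fin K, EuclideanSpace ℝ (Fin (Nv k)) → ℝ)
    (l : EuclideanSpace ℝ (Fin M) → ℝ)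
    (l' : EuclideanSpace ℝ (Fin M) → EuclideanSpace ℝ (Fin M))
    (A : ∀ k : Fin K, EuclideanSpace ℝ (Fin (Nv k)) →L[ℝ] EuclideanSpace ℝ (Fin M))
    (X : ∀ k : Fin K, Set (EuclideanSpace ℝ (Fin (Nv k))))
    (Lc ρ : ℝ)
    (x : ℕ → ∀ k : Fin K, EuclideanSpace ℝ (Fin (Nv k)))
    (x0 y : ℕ → EuclideanSpace ℝ (Fin M))
    (C : ℕ → Finset (Option (Fin K)))
    -- Assumption C1
    (hgrad : ∀ z, HasGradientAt l (l' z) z)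
    (hLpos : 0 < Lc)
    (hLip : ∀ u v, ‖l' u - l' v‖ ≤ Lc * ‖u - v‖)
    (hXne : ∀ k, (X k).Nonempty) (hXcl : ∀ k, IsClosed (X k))
    (hXcv : ∀ k, Convex ℝ (X k))
    (hA : ∀ k, Function.Injective (A k))
    (hρ : 0 < ρ)
    -- Algorithm 4
    (hC1 : C 1 = Finset.univ)
    (hxupd : ∀ (t : ℕ) (k : Fin K),
      (some k ∈ C (t + 1) → x (t + 1) k ∈ X k ∧ ∀ z ∈ X k,
        g k (x (t + 1) k) - ⟪y t, A k (x (t + 1) k)⟫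
            + ρ / 2 * ‖x0 t - (∑ j ∈ Finset.univ.filter (fun j => j < k), A j (x (t + 1) j))
                - (∑ j ∈ Finset.univ.filter (fun j => k < j), A j (x t j))
                - A k (x (t + 1) k)‖ ^ 2
          ≤ g k z - ⟪y t, A k z⟫
            + ρ / 2 * ‖x0 t - (∑ j ∈ Finset.univ.filter (fun j => j < k), A j (x (t + 1) j))
                - (∑ j ∈ Finset.univ.filter (fun j => k < j), A j (x t j))
                - A k z‖ ^ 2) ∧
      (some k ∉ C (t + 1) → x (t + 1) k = x t k))
    (hx0upd : ∀ t : ℕ,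
      (none ∈ C (t + 1) → ∀ z : EuclideanSpace ℝ (Fin M),
        l (x0 (t + 1)) + ⟪y t, x0 (t + 1)⟫
            + ρ / 2 * ‖x0 (t + 1) - ∑ k, A k (x (t + 1) k)‖ ^ 2
          ≤ l z + ⟪y t, z⟫ + ρ / 2 * ‖z - ∑ k, A k (x (t + 1) k)‖ ^ 2) ∧
      (none ∉ C (t + 1) → x0 (t + 1) = x0 t))
    (hyupd : ∀ t : ℕ,
      (none ∈ C (t + 1) →
        y (t + 1) = y t + ρ • (x0 (t + 1) - ∑ k, A k (x (t + 1) k))) ∧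
      (none ∉ C (t + 1) → y (t + 1) = y t))
    -- Assumption C2
    (γk : Fin K → ℝ) (γρ : ℝ)
    (hγkpos : ∀ k, 0 < γk k) (hγρpos : 0 < γρ)
    (hstrongk : ∀ k, StrongConvexOn (X k) (γk k)
      (fun z : EuclideanSpace ℝ (Fin (Nv k)) => g k z + ρ / 2 * ‖A k z‖ ^ 2))
    (hstrong0 : StrongConvexOn Set.univ γρ
      (fun z : EuclideanSpace ℝ (Fin M) => l z + ρ / 2 * ‖z‖ ^ 2))
    (hC2b : 2 * Lc ^ 2 < ρ * γρ) (hC2c : Lc ≤ ρ)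
    -- Assumption C4
    (KK : Finset (Fin K)) (Lgk : Fin K → ℝ)
    (gg' : ∀ k : Fin K, EuclideanSpace ℝ (Fin (Nv k)) → EuclideanSpace ℝ (Fin (Nv k)))
    (hKcvx : ∀ k ∈ KK, ConvexOn ℝ Set.univ (g k))
    (hKsm : ∀ k ∉ KK, (∀ z, HasGradientAt (g k) (gg' k z) z) ∧ 0 < Lgk k ∧
      ∀ u ∈ X k, ∀ v ∈ X k, ‖gg' k u - gg' k v‖ ≤ Lgk k * ‖u - v‖)
    -- Assumption C3 : `f` is bounded below over the feasible set
    (hbdd : BddBelow ((fun xx : ∀ k : Fin K, EuclideanSpace ℝ (Fin (Nv k)) =>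
      (∑ k, g k (xx k)) + l (∑ k, A k (xx k))) '' {xx | ∀ k, xx k ∈ X k}))
    -- period-T essentially cyclic rule
    (T : ℕ) (hT : 1 ≤ T)
    (hcyc : ∀ (t : ℕ) (j : Option (Fin K)), ∃ i, 1 ≤ i ∧ i ≤ T ∧ j ∈ C (t + i)) :
    Tendsto (fun t : ℕ => ‖(∑ k, A k (x (t + 1) k)) - x0 (t + 1)‖) atTop (nhds 0) ∧
    (∀ (xs : ∀ k : Fin K, EuclideanSpace ℝ (Fin (Nv k)))
        (x0s ys : EuclideanSpace ℝ (Fin M)) (φ : ℕ → ℕ), StrictMono φ →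
      (∀ k, Tendsto (fun t => x (φ t) k) atTop (nhds (xs k))) →
      Tendsto (fun t => x0 (φ t)) atTop (nhds x0s) →
      Tendsto (fun t => y (φ t)) atTop (nhds ys) →
      (∀ k ∈ KK, xs k ∈ X k ∧ ∀ z ∈ X k,
        g k (xs k) - ⟪ys, A k (xs k)⟫ ≤ g k z - ⟪ys, A k z⟫) ∧
      (∀ k ∉ KK, xs k ∈ X k ∧ ∀ z ∈ X k,
        0 ≤ ⟪z - xs k, gg' k (xs k)⟫ - ⟪A k (z - xs k), ys⟫) ∧
      l' x0s + ys = 0 ∧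
      (∑ k, A k (xs k)) = x0s) :=
  theorem4_1_parts12_general g l l' A X Lc ρ x x0 y C hgrad hLip hXcl hXcv hρ hC1 hxupd hx0upd hyupd
    γk γρ hγkpos hstrongk hstrong0 hC2b hC2c KK Lgk gg' hKcvx hKsm hbdd T hcyc
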